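/- Every milling tour of a grid polyhedron makes at least one turn (counting U-turns as turns). -/

import Mathlib

open scoped Classical

namespace StripFold

/-- A cell of the unit-cube grid (also used for integer grid points and vectors). -/
abbrev Cell : Type := Fin 3 → ℤ

/-- A grid square `(c, i)`: the common face of the unit cubes at cells `c` and `c + eᵢ`. -/
abbrev Sq : Type := Cell × Fin 3

/-- A grid edge `(p, d)`: the unit segment of the cube grid from `p` to `p + e_d`. -/
abbrev GridEdge : Type := Cell × Fin 3

/-- The standard unit vector `eᵢ`. -/
def unitVec (i : Fin 3) : Cell := fun j => if j = i then 1 else 0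

/-- The four grid edges lying on (the boundary of) a grid square. -/
def edgesOf (s : Sq) : Set GridEdge :=
  { e | ∃ j k : Fin 3, j ≠ s.2 ∧ k ≠ s.2 ∧ j ≠ k ∧ e.2 = j ∧
      e.1 s.2 = s.1 s.2 + 1 ∧ e.1 j = s.1 j ∧ (e.1 k = s.1 k ∨ e.1 k = s.1 k + 1) }

/-- The four grid vertices (corners) of a grid square. -/
def vertsOf (s : Sq) : Set Cell :=
  { q | q s.2 = s.1 s.2 + 1 ∧ ∀ j, j ≠ s.2 → (q j = s.1 j ∨ q j = s.1 j + 1) }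

/-- Two grid squares are edge-adjacent: they are distinct and share a grid edge. -/
def edgeAdj (s t : Sq) : Prop := s ≠ t ∧ (edgesOf s ∩ edgesOf t).Nonempty

lemma edgeAdj_symm {s t : Sq} (h : edgeAdj s t) : edgeAdj t s :=
  ⟨h.1.symm, by rw [Set.inter_comm]; exact h.2⟩

/-- The dual graph of a set of grid squares: vertices are the squares, edges join
edge-adjacent squares. -/
def dualGraph (S : Set Sq) : SimpleGraph S where
  Adj a b := edgeAdj a.1 b.1
  symm := ⟨fun _ _ h => edgeAdj_symm h⟩
  loopless := ⟨fun _ h => h.1 rfl⟩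

/-- A grid surface: a finite nonempty set of grid squares whose dual graph is connected. -/
structure IsGridSurface (S : Set Sq) : Prop where
  finite : S.Finite
  nonempty : S.Nonempty
  connected : (dualGraph S).Connected

/-- A milling tour of a grid surface: a closed walk in the dual graph visiting every
vertex at least once.  Its length is `w.length`. -/
def IsMillingTour {S : Set Sq} {v : S} (w : (dualGraph S).Walk v v) : Prop :=
  ∀ u : S, u ∈ w.support

/-- The boundary of a set `C` of unit cubes: the grid squares incident to exactly one
cube of `C`. -/
def boundary (C : Set Cell) : Set Sq :=
  { s | Xor' (s.1 ∈ C) (s.1 + unitVec s.2 ∈ C) }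

/-- All grid edges lying on squares of `P`. -/
def edgesOfSet (P : Set Sq) : Set GridEdge := ⋃ s ∈ P, edgesOf s

/-- All grid vertices lying on squares of `P`. -/
def vertsOfSet (P : Set Sq) : Set Cell := ⋃ s ∈ P, vertsOf s

/-- A grid polyhedron: `P` is the boundary of a finite nonempty set `C` of unit cubes,
`P` is a grid surface, every grid edge lying on a square of `P` lies on exactly two
squares of `P`, and `V - E + F = 2` (stated as `V + F = E + 2`). -/
structure IsGridPolyhedron (C : Set Cell) (P : Set Sq) : Prop where
  finC : C.Finite
  neC : C.Nonempty
  bdry : P = boundary C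
  surface : IsGridSurface P
  edgeTwo : ∀ e : GridEdge, (∃ s ∈ P, e ∈ edgesOf s) →
    { s | s ∈ P ∧ e ∈ edgesOf s }.ncard = 2
  euler : (vertsOfSet P).ncard + P.ncard = (edgesOfSet P).ncard + 2

/-- The squares of `P` that lie in the slab `x_a ∈ [x, x + 1]` and whose normal is
perpendicular to axis `a`. -/
def slabSquares (P : Set Sq) (a : Fin 3) (x : ℤ) : Set Sq :=
  { s | s ∈ P ∧ s.2 ≠ a ∧ s.1 a = x }

/-- `B` is a connected component, under edge-adjacency, of the set `T` of grid squares. -/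
def IsCompOf (B T : Set Sq) : Prop :=
  B.Nonempty ∧ B ⊆ T ∧ (dualGraph B).Connected ∧
    ∀ s ∈ B, ∀ t ∈ T, edgeAdj s t → t ∈ B

/-- A band of a grid polyhedron `P`: an `x`-, `y`-, or `z`-band, i.e. a connected
component under edge-adjacency of the squares of `P` lying in a single slab with
normal perpendicular to the slab axis. -/
def IsBand (P : Set Sq) (B : Set Sq) : Prop :=
  ∃ (a : Fin 3) (x : ℤ), IsCompOf B (slabSquares P a x)

/-- Two bands overlap: they are distinct and some grid square belongs to both. -/
def Overlaps (B B' : Set Sq) : Prop := B ≠ B' ∧ (B ∩ B').Nonempty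

/-- Two bands are adjacent: they do not overlap and some grid square of one is
edge-adjacent to some grid square of the other. -/
def BandAdjacent (B B' : Set Sq) : Prop :=
  ¬ Overlaps B B' ∧ ∃ g ∈ B, ∃ g' ∈ B', edgeAdj g g'

/-- A band cover of `P`: a set of bands of `P` covering every grid square of `P`. -/
def IsBandCover (P : Set Sq) (S : Set (Set Sq)) : Prop :=
  (∀ B ∈ S, IsBand P B) ∧ ∀ g ∈ P, ∃ B ∈ S, g ∈ B

/-- The band graph `G_P`: one vertex per band of `P`, an edge between two bands iff
they overlap. -/
def bandGraph (P : Set Sq) : SimpleGraph {B : Set Sq // IsBand P B} where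
  Adj B B' := Overlaps B.1 B'.1
  symm := ⟨fun _ _ h => ⟨h.1.symm, by rw [Set.inter_comm]; exact h.2⟩⟩
  loopless := ⟨fun _ h => h.1 rfl⟩

section Walks

variable {S : Set Sq} {v : S}

/-- The index of the previous position of a closed walk, cyclically. -/
def prevIdx (w : (dualGraph S).Walk v v) (k : ℕ) : ℕ := (k + w.length - 1) % w.length

/-- The index of the next position of a closed walk, cyclically. -/
def nextIdx (w : (dualGraph S).Walk v v) (k : ℕ) : ℕ := (k + 1) % w.length

/-- The grid square visited at position `k` of the walk. -/
def squareAt (w : (dualGraph S).Walk v v) (k : ℕ) : Sq := (w.getVert k).1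

/-- `e` is a side shared by grid squares `s` and `t`. -/
def sharedSide (s t : Sq) (e : GridEdge) : Prop := e ∈ edgesOf s ∧ e ∈ edgesOf t

/-- `e` is the side through which the visit at position `k` enters its grid square. -/
def EnterSide (w : (dualGraph S).Walk v v) (k : ℕ) (e : GridEdge) : Prop :=
  sharedSide (squareAt w (prevIdx w k)) (squareAt w k) e

/-- `e` is the side through which the visit at position `k` exits its grid square. -/
def ExitSide (w : (dualGraph S).Walk v v) (k : ℕ) (e : GridEdge) : Prop :=
  sharedSide (squareAt w k) (squareAt w (nextIdx w k)) e

/-- The visit at position `k` is straight: it enters and exits through opposite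
(distinct parallel) sides. -/
def StraightVisit (w : (dualGraph S).Walk v v) (k : ℕ) : Prop :=
  ∃ e₁ e₂, EnterSide w k e₁ ∧ ExitSide w k e₂ ∧ e₁ ≠ e₂ ∧ e₁.2 = e₂.2

/-- The visit at position `k` is a turn: it enters and exits through incident
(non-parallel) sides. -/
def TurnVisit (w : (dualGraph S).Walk v v) (k : ℕ) : Prop :=
  ∃ e₁ e₂, EnterSide w k e₁ ∧ ExitSide w k e₂ ∧ e₁.2 ≠ e₂.2

/-- The visit at position `k` is a U-turn: it enters and exits through the same side. -/
def UTurnVisit (w : (dualGraph S).Walk v v) (k : ℕ) : Prop :=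
  ∃ e, EnterSide w k e ∧ ExitSide w k e

/-- The number of turns of a closed walk: the number of visits that are turns or
U-turns. -/
noncomputable def turnCount (w : (dualGraph S).Walk v v) : ℕ :=
  {k | k < w.length ∧ (TurnVisit w k ∨ UTurnVisit w k)}.ncard

/-- The set of positions at which the walk visits the grid square `g`. -/
def visitsOf (w : (dualGraph S).Walk v v) (g : Sq) : Set ℕ :=
  {k | k < w.length ∧ squareAt w k = g}

/-- `g` is visited exactly at the two distinct positions `k₁` and `k₂`. -/
def JunctionAt (w : (dualGraph S).Walk v v) (g : Sq) (k₁ k₂ : ℕ) : Prop :=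
  k₁ ≠ k₂ ∧ visitsOf w g = {k₁, k₂}

/-- The four sides used by the two visits at positions `k₁, k₂` are `e₁, e₂, e₃, e₄`,
pairwise distinct (hence each of the four sides of the square is used exactly once). -/
def FourSides (w : (dualGraph S).Walk v v) (k₁ k₂ : ℕ) (e₁ e₂ e₃ e₄ : GridEdge) : Prop :=
  EnterSide w k₁ e₁ ∧ ExitSide w k₁ e₂ ∧ EnterSide w k₂ e₃ ∧ ExitSide w k₂ e₄ ∧
    e₁ ≠ e₂ ∧ e₁ ≠ e₃ ∧ e₁ ≠ e₄ ∧ e₂ ≠ e₃ ∧ e₂ ≠ e₄ ∧ e₃ ≠ e₄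

/-- `g` is a straight junction: visited exactly twice, each of its four sides used
exactly once, and both visits are straight. -/
def IsStraightJunction (w : (dualGraph S).Walk v v) (g : Sq) : Prop :=
  ∃ k₁ k₂, JunctionAt w g k₁ k₂ ∧ ∃ e₁ e₂ e₃ e₄, FourSides w k₁ k₂ e₁ e₂ e₃ e₄ ∧
    e₁.2 = e₂.2 ∧ e₃.2 = e₄.2

/-- `g` is a turn junction: visited exactly twice, each of its four sides used
exactly once, and both visits are turns. -/
def IsTurnJunction (w : (dualGraph S).Walk v v) (g : Sq) : Prop :=
  ∃ k₁ k₂, JunctionAt w g k₁ k₂ ∧ ∃ e₁ e₂ e₃ e₄, FourSides w k₁ k₂ e₁ e₂ e₃ e₄ ∧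
    e₁.2 ≠ e₂.2 ∧ e₃.2 ≠ e₄.2

end Walks

/-- The third coordinate axis, distinct from distinct axes `i` and `d`. -/
def thirdIdx (i d : Fin 3) : Fin 3 := ⟨(3 - (i.val + d.val)) % 3, Nat.mod_lt _ (by norm_num)⟩

/-- Cross product of integer vectors in 3-space. -/
def cross3 (u v : Cell) : Cell := fun i => u (i + 1) * v (i + 2) - u (i + 2) * v (i + 1)

/-- Dot product of integer vectors in 3-space. -/
def dot3 (u v : Cell) : ℤ := ∑ i : Fin 3, u i * v i

/-- The outward unit normal of the grid square `s` on the boundary of the cube set `C`: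
it points out of `C`. -/
noncomputable def outwardNormal (C : Set Cell) (s : Sq) : Cell :=
  if s.1 ∈ C then unitVec s.2 else -unitVec s.2

/-- The unit direction of travel when entering the grid square `g` through its side `e`:
in-plane, perpendicular to `e`, pointing from `e` into `g`. -/
def enterDir (g : Sq) (e : GridEdge) : Cell :=
  if e.1 (thirdIdx g.2 e.2) = g.1 (thirdIdx g.2 e.2) then unitVec (thirdIdx g.2 e.2)
  else -unitVec (thirdIdx g.2 e.2)

/-- The unit direction of travel when exiting the grid square `g` through its side `e`. -/
def exitDir (g : Sq) (e : GridEdge) : Cell := -enterDir g e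

section Turns

variable {S : Set Sq} {v : S}

/-- The visit at position `k` is a left turn: it enters with direction `u` and exits
with direction `v` through incident sides, with `(u × v) · n > 0` for the outward
normal `n`. -/
def IsLeftTurnVisit (C : Set Cell) (w : (dualGraph S).Walk v v) (k : ℕ) : Prop :=
  ∃ e₁ e₂, EnterSide w k e₁ ∧ ExitSide w k e₂ ∧ e₁.2 ≠ e₂.2 ∧
    0 < dot3 (cross3 (enterDir (squareAt w k) e₁) (exitDir (squareAt w k) e₂))
        (outwardNormal C (squareAt w k))

/-- The visit at position `k` is a right turn: `(u × v) · n < 0`. -/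
def IsRightTurnVisit (C : Set Cell) (w : (dualGraph S).Walk v v) (k : ℕ) : Prop :=
  ∃ e₁ e₂, EnterSide w k e₁ ∧ ExitSide w k e₂ ∧ e₁.2 ≠ e₂.2 ∧
    dot3 (cross3 (enterDir (squareAt w k) e₁) (exitDir (squareAt w k) e₂))
        (outwardNormal C (squareAt w k)) < 0

end Turns

/-- `k₁` and `k₂` are cyclically consecutive elements of the set `T` of positions:
no element of `T` lies strictly between them in cyclic order. -/
def CyclicallyConsecutive (T : Set ℕ) (k₁ k₂ : ℕ) : Prop :=
  k₁ ∈ T ∧ k₂ ∈ T ∧ k₁ ≠ k₂ ∧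
    ∀ j ∈ T, j ≠ k₁ → j ≠ k₂ →
      ¬ ((k₁ < j ∧ j < k₂) ∨ (k₂ < k₁ ∧ (k₁ < j ∨ j < k₂)))

/-!
If a tour never turns, consecutive crossed sides are parallel, so every side it crosses is
parallel to one axis `j`; it then never enters a square with normal `j`, whose sides are all
perpendicular to `j`. But the boundary of a finite set of cubes has squares of every normal:
the bottom face of a lowest cube along each axis.
-/

lemma edgesOf_snd_ne {s : Sq} {e : GridEdge} (he : e ∈ edgesOf s) : e.2 ≠ s.2 := by
  obtain ⟨j, k, hj, -, -, hej, -⟩ := he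
  exact hej ▸ hj

lemma exists_mem_boundary_snd_eq {C : Set Cell} (hC : C.Finite) (hne : C.Nonempty)
    (j : Fin 3) : ∃ s ∈ boundary C, s.2 = j := by
  obtain ⟨c, hc, hmin⟩ := Set.exists_min_image C (fun c => c j) hC hne
  refine ⟨(c - unitVec j, j), Or.inr ⟨by simpa using hc, fun hmem => ?_⟩, rfl⟩
  have := hmin _ hmem
  simp [unitVec] at this

section Walks

variable {S : Set Sq} {v : S} (w : (dualGraph S).Walk v v)

lemma length_pos_of_isMillingTour (hw : IsMillingTour w) (hS : S.Nontrivial) :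
    0 < w.length := by
  obtain ⟨s, hs, t, ht, hst⟩ := hS
  refine Nat.pos_of_ne_zero fun hL => hst ?_
  have hsupp := SimpleGraph.Walk.nil_iff_support_eq.1 (SimpleGraph.Walk.length_eq_zero_iff.1 hL)
  have hs' := hw ⟨s, hs⟩
  have ht' := hw ⟨t, ht⟩
  simp only [hsupp, List.mem_singleton] at hs' ht'
  exact congrArg Subtype.val (hs'.trans ht'.symm)

lemma squareAt_length : squareAt w w.length = squareAt w 0 := by
  simp [squareAt]

lemma exists_lt_length_squareAt_eq (hw : IsMillingTour w) (hL : 0 < w.length) {s : Sq}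
    (hs : s ∈ S) : ∃ k < w.length, squareAt w k = s := by
  obtain ⟨n, hn, hnL⟩ := SimpleGraph.Walk.mem_support_iff_exists_getVert.1 (hw ⟨s, hs⟩)
  rcases hnL.lt_or_eq with hnL | rfl
  · exact ⟨n, hnL, by rw [squareAt, hn]⟩
  · exact ⟨0, hL, by rw [← squareAt_length, squareAt, hn]⟩

lemma squareAt_nextIdx {k : ℕ} (hk : k < w.length) :
    squareAt w (nextIdx w k) = squareAt w (k + 1) := by
  rcases (Nat.succ_le_of_lt hk).lt_or_eq with hk' | hk'
  · rw [nextIdx, Nat.mod_eq_of_lt hk']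
  · rw [nextIdx, ← Nat.succ_eq_add_one, hk', Nat.mod_self, squareAt_length]

lemma prevIdx_succ {k : ℕ} (hk : k < w.length) : prevIdx w (k + 1) = k := by
  rw [prevIdx, Nat.add_right_comm, Nat.add_sub_cancel, Nat.add_mod_right, Nat.mod_eq_of_lt hk]

lemma nextIdx_prevIdx {k : ℕ} (hk : k < w.length) : nextIdx w (prevIdx w k) = k := by
  rw [nextIdx, prevIdx, Nat.mod_add_mod, Nat.sub_add_cancel (by omega), Nat.add_mod_right,
    Nat.mod_eq_of_lt hk]

lemma enterSide_succ_iff {k : ℕ} (hk : k < w.length) {e : GridEdge} :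
    EnterSide w (k + 1) e ↔ ExitSide w k e := by
  rw [EnterSide, ExitSide, prevIdx_succ w hk, squareAt_nextIdx w hk]

lemma enterSide_iff_exitSide_prevIdx {k : ℕ} (hk : k < w.length) {e : GridEdge} :
    EnterSide w k e ↔ ExitSide w (prevIdx w k) e := by
  rw [EnterSide, ExitSide, nextIdx_prevIdx w hk]

lemma exists_exitSide {k : ℕ} (hk : k < w.length) : ∃ e, ExitSide w k e := by
  obtain ⟨e, he⟩ := (w.adj_getVert_succ hk).2
  exact ⟨e, by rw [ExitSide, squareAt_nextIdx w hk]; exact he⟩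

lemma exists_enterSide {k : ℕ} (hk : k < w.length) : ∃ e, EnterSide w k e := by
  simp_rw [enterSide_iff_exitSide_prevIdx w hk]
  exact exists_exitSide w (Nat.mod_lt _ (by omega))

lemma exitSide_snd_eq_of_forall_not_turnVisit (hturn : ∀ k < w.length, ¬ TurnVisit w k)
    {e₀ : GridEdge} (he₀ : EnterSide w 0 e₀) {k : ℕ} (hk : k < w.length) {e : GridEdge}
    (he : ExitSide w k e) : e.2 = e₀.2 := by
  induction k generalizing e with
  | zero => exact by_contra fun hne => hturn 0 hk ⟨e₀, e, he₀, he, Ne.symm hne⟩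
  | succ k ih =>
    have hk' : k < w.length := by omega
    obtain ⟨e', he'⟩ := exists_exitSide w hk'
    have hpar : e'.2 = e.2 := by_contra fun hne =>
      hturn (k + 1) hk ⟨e', e, (enterSide_succ_iff w hk').2 he', he, hne⟩
    exact hpar ▸ ih hk' he'

lemma exists_turnVisit_of_forall_exists_snd_eq (hw : IsMillingTour w) (hL : 0 < w.length)
    (hS : ∀ j, ∃ s ∈ S, s.2 = j) : ∃ k < w.length, TurnVisit w k := by
  by_contra! hturn
  obtain ⟨e₀, he₀⟩ := exists_enterSide w hL
  obtain ⟨s, hs, hsn⟩ := hS e₀.2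
  obtain ⟨k, hk, rfl⟩ := exists_lt_length_squareAt_eq w hw hL hs
  obtain ⟨e, he⟩ := exists_exitSide w hk
  exact edgesOf_snd_ne he.1 (hsn ▸ exitSide_snd_eq_of_forall_not_turnVisit w hturn he₀ hk he)

lemma one_le_turnCount {k : ℕ} (hk : k < w.length) (h : TurnVisit w k ∨ UTurnVisit w k) :
    1 ≤ turnCount w :=
  (Set.ncard_pos ((Set.finite_lt_nat w.length).subset fun _ hj => hj.1)).2 ⟨k, hk, h⟩

end Walks

/-- Every milling tour of a grid polyhedron makes at least one turn
(counting U-turns as turns). -/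
theorem milling_tour_has_a_turn (C : Set Cell) (P : Set Sq)
    (hP : IsGridPolyhedron C P) {v : P} (w : (dualGraph P).Walk v v)
    (hw : IsMillingTour w) : 1 ≤ turnCount w := by
  have hnormal : ∀ j, ∃ s ∈ P, s.2 = j := hP.bdry ▸ exists_mem_boundary_snd_eq hP.finC hP.neC
  obtain ⟨s, hs, hs0⟩ := hnormal 0
  obtain ⟨t, ht, ht1⟩ := hnormal 1
  have hL : 0 < w.length :=
    length_pos_of_isMillingTour w hw ⟨s, hs, t, ht, fun hst => by simp [hst, ht1] at hs0⟩
  obtain ⟨k, hk, hturn⟩ := exists_turnVisit_of_forall_exists_snd_eq w hw hL hnormal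
  exact one_le_turnCount w hk (Or.inl hturn)

end StripFold
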